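/- Let A be a C*-algebra and let a, b be positive elements of A. The following are equivalent: (i) a is Cuntz subequivalent to b; (ii) (a − ε)₊ is Cuntz subequivalent to b for every ε > 0; (iii) for every ε > 0 there exists δ > 0 such that (a − ε)₊ is Cuntz subequivalent to (b − δ)₊. -/

import Mathlib

open Filter Topology

set_option linter.unusedSectionVars false
set_option linter.unusedVariables false
set_option maxHeartbeats 1000000

variable {A : Type*} [NonUnitalCStarAlgebra A] [PartialOrder A] [StarOrderedRing A]

/-- Cuntz subequivalence: `a ≲ b` iff there is a sequence `vₙ` with `‖vₙ* b vₙ - a‖ → 0`. -/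
def CuntzLE (a b : A) : Prop :=
  ∃ v : ℕ → A, Tendsto (fun n => ‖star (v n) * b * v n - a‖) atTop (𝓝 0)

/-- Cuntz equivalence: `a ∼ b` iff `a ≲ b` and `b ≲ a`. -/
def CuntzEquiv (a b : A) : Prop := CuntzLE a b ∧ CuntzLE b a

/-- The hereditary C*-subalgebra generated by `b`: the norm closure of `{b x b : x ∈ A}`. -/
def her (b : A) : Set A := closure {x : A | ∃ y : A, x = b * y * b}

/-- `(a - ε)₊`, i.e. the function `t ↦ max (t - ε) 0` applied to `a` via the
continuous functional calculus. -/
noncomputable def cut (a : A) (ε : ℝ) : A := cfcₙ (fun t : ℝ => max (t - ε) 0) a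

/-! ### Auxiliary lemmas -/

lemma my_tendsto_inv_nat : Tendsto (fun n : ℕ => ((n : ℝ) + 1)⁻¹) atTop (𝓝 0) := by
  simpa [one_div] using tendsto_one_div_add_atTop_nhds_zero_nat (𝕜 := ℝ)

lemma norm_conj_le (v z : A) : ‖star v * z * v‖ ≤ ‖v‖ ^ 2 * ‖z‖ := by
  calc ‖star v * z * v‖ ≤ ‖star v * z‖ * ‖v‖ := norm_mul_le _ _
    _ ≤ ‖star v‖ * ‖z‖ * ‖v‖ := by gcongr; exact norm_mul_le _ _
    _ = ‖v‖ ^ 2 * ‖z‖ := by rw [norm_star]; ring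

lemma cuntzLE_conj (b x : A) : CuntzLE (star x * b * x) b :=
  ⟨fun _ => x, by simpa using tendsto_const_nhds⟩

lemma CuntzLE.trans' {a b c : A} (h1 : CuntzLE a b) (h2 : CuntzLE b c) : CuntzLE a c := by
  obtain ⟨v, hv⟩ := h1
  obtain ⟨w, hw⟩ := h2
  have key : ∀ n : ℕ, ∃ m, ‖star (w m) * c * w m - b‖ < ((‖v n‖ + 1) ^ 2 * ((n : ℝ) + 1))⁻¹ :=
    fun n => (hw.eventually (gt_mem_nhds (by positivity))).exists
  choose m hm using key
  refine ⟨fun n => w (m n) * v n, ?_⟩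
  apply squeeze_zero (g := fun n => ‖star (v n) * b * v n - a‖ + ((n : ℝ) + 1)⁻¹)
    (fun n => norm_nonneg _)
  · intro n
    have hid : star (w (m n) * v n) * c * (w (m n) * v n) - a
        = star (v n) * (star (w (m n)) * c * w (m n) - b) * v n
          + (star (v n) * b * v n - a) := by
      simp only [star_mul]
      noncomm_ring
    rw [hid]
    refine (norm_add_le _ _).trans ?_
    rw [add_comm]
    gcongr
    refine (norm_conj_le _ _).trans ?_
    have h1 : (0:ℝ) < (‖v n‖ + 1) ^ 2 := by positivity
    have h2 : ‖v n‖ ^ 2 * ‖star (w (m n)) * c * w (m n) - b‖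
        ≤ (‖v n‖ + 1) ^ 2 * ((‖v n‖ + 1) ^ 2 * ((n : ℝ) + 1))⁻¹ := by
      have := (hm n).le
      have hv2 : ‖v n‖ ^ 2 ≤ (‖v n‖ + 1) ^ 2 := by nlinarith [norm_nonneg (v n)]
      exact mul_le_mul hv2 this (norm_nonneg _) h1.le
    refine h2.trans ?_
    rw [mul_inv, ← mul_assoc, mul_inv_cancel₀ h1.ne']
    simp
  · simpa using hv.add my_tendsto_inv_nat

lemma cut_nonneg (a : A) (ε : ℝ) : 0 ≤ cut a ε :=
  cfcₙ_nonneg fun t _ => le_max_right _ _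

lemma norm_cut_sub_le (a : A) (ha : 0 ≤ a) {ε : ℝ} (hε : 0 < ε) : ‖cut a ε - a‖ ≤ ε := by
  have hsa : IsSelfAdjoint a := .of_nonneg ha
  have : cut a ε - a = cfcₙ (fun t : ℝ => max (t - ε) 0 - t) a := by
    rw [cfcₙ_sub (fun t : ℝ => max (t - ε) 0) (fun t : ℝ => t) a (by fun_prop) (by simp [hε.le])
      (by fun_prop), cfcₙ_id' ℝ a, cut]
  rw [this]
  refine norm_cfcₙ_le fun t ht => ?_
  have ht0 : 0 ≤ t := quasispectrum_nonneg_of_nonneg a ha t ht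
  rw [Real.norm_eq_abs, abs_le]
  rcases le_total t ε with h | h
  · rw [max_eq_right (by linarith)]; constructor <;> linarith
  · rw [max_eq_left (by linarith)]; constructor <;> linarith

lemma cut_cut (a : A) (ha : 0 ≤ a) {s t : ℝ} (hs : 0 < s) (ht : 0 < t) :
    cut (cut a s) t = cut a (s + t) := by
  have hsa : IsSelfAdjoint a := .of_nonneg ha
  rw [cut, cut, cut, ← cfcₙ_comp (fun u : ℝ => max (u - t) 0) (fun u : ℝ => max (u - s) 0) a
    (by fun_prop) (by simp [ht.le]) (by fun_prop) (by simp [hs.le])]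
  apply cfcₙ_congr
  intro u _
  simp only [Function.comp_apply]
  rcases le_total u s with h | h
  · have h1 : max (u - s) 0 = 0 := max_eq_right (by linarith)
    rw [h1]
    have h2 : max ((0:ℝ) - t) 0 = 0 := max_eq_right (by linarith)
    rw [h2, eq_comm]
    exact max_eq_right (by linarith)
  · have h1 : max (u - s) 0 = u - s := max_eq_left (by linarith)
    rw [h1]
    rcases le_total u (s + t) with h2 | h2
    · have h3 : max (u - s - t) 0 = 0 := max_eq_right (by linarith)
      rw [h3, eq_comm]
      exact max_eq_right (by linarith)
    · have h3 : max (u - s - t) 0 = u - s - t := max_eq_left (by linarith)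
      have h4 : max (u - (s + t)) 0 = u - (s + t) := max_eq_left (by linarith)
      rw [h3, h4]; ring

lemma exists_conj_cut (a : A) (ha : 0 ≤ a) {ε : ℝ} (hε : 0 < ε) :
    ∃ u : A, IsSelfAdjoint u ∧ ‖u‖ ≤ 1 ∧ u * a * u = cut a ε := by
  have hsa : IsSelfAdjoint a := .of_nonneg ha
  set g : ℝ → ℝ := fun t => Real.sqrt (max (t - ε) 0 / max t ε) with hg_def
  have hden : ∀ t : ℝ, 0 < max t ε := fun t => lt_max_of_lt_right hε
  have hquot : ∀ t : ℝ, 0 ≤ max (t - ε) 0 / max t ε :=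
    fun t => div_nonneg (le_max_right _ _) (hden t).le
  have hg : Continuous g := by
    apply Real.continuous_sqrt.comp
    exact (by fun_prop : Continuous fun t : ℝ => max (t - ε) 0).div (by fun_prop)
      fun t => (hden t).ne'
  have hg0 : g 0 = 0 := by
    have : max ((0:ℝ) - ε) 0 = 0 := max_eq_right (by linarith)
    simp [hg_def, this, hε.le]
  have hgsq : ∀ t : ℝ, g t * g t = max (t - ε) 0 / max t ε := fun t =>
    Real.mul_self_sqrt (hquot t)
  have key : ∀ t : ℝ, g t * (t * g t) = max (t - ε) 0 := by
    intro t
    have : g t * (t * g t) = (g t * g t) * t := by ring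
    rw [this, hgsq]
    rcases le_total t ε with h | h
    · rw [max_eq_right (by linarith)]; simp
    · rw [max_eq_left h, div_mul_cancel₀ _ (by linarith : t ≠ 0)]
  refine ⟨cfcₙ g a, cfcₙ_predicate g a, ?_, ?_⟩
  · refine norm_cfcₙ_le fun t _ => ?_
    rw [Real.norm_eq_abs, abs_of_nonneg (Real.sqrt_nonneg _)]
    refine Real.sqrt_le_one.mpr ?_
    rw [div_le_one (hden t)]
    exact max_le_max (by linarith) hε.le
  · have h1 : cfcₙ (fun t : ℝ => t * g t) a = a * cfcₙ g a := by
      rw [cfcₙ_mul (fun t : ℝ => t) g a (by fun_prop) rfl hg.continuousOn hg0, cfcₙ_id' ℝ a]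
    have h2 : cfcₙ (fun t : ℝ => g t * (t * g t)) a = cfcₙ g a * (a * cfcₙ g a) := by
      rw [cfcₙ_mul g (fun t : ℝ => t * g t) a hg.continuousOn hg0
        (by exact (continuous_id.mul hg).continuousOn) (by simp [hg0]), h1]
    have h3 : cfcₙ (fun t : ℝ => g t * (t * g t)) a = cut a ε := by
      rw [cut]; exact congrArg (fun f => cfcₙ f a) (funext key)
    rw [← mul_assoc] at h2
    rw [← h2, h3]

open scoped CStarAlgebra in
lemma cuntzLE_of_le {x y : A} (hx : 0 ≤ x) (hxy : x ≤ y) : CuntzLE x y := by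
  have hy : 0 ≤ y := hx.trans hxy
  have hX : (0 : A⁺¹) ≤ (x : A⁺¹) := Unitization.inr_nonneg_iff.mpr hx
  have hY : (0 : A⁺¹) ≤ (y : A⁺¹) := Unitization.inr_nonneg_iff.mpr hy
  have hYsa : IsSelfAdjoint (y : A⁺¹) := .of_nonneg hY
  have hXY : (x : A⁺¹) ≤ (y : A⁺¹) :=
    (Unitization.inr_le_iff x y (.of_nonneg hx) (.of_nonneg hy)).mpr hxy
  set s : A := CFC.sqrt x with hs_def
  have hs : 0 ≤ s := CFC.sqrt_nonneg x
  have hS : (s : A⁺¹) * (s : A⁺¹) = (x : A⁺¹) := by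
    rw [← Unitization.inr_mul, CFC.sqrt_mul_sqrt_self x hx]
  have hSsa : IsSelfAdjoint (s : A⁺¹) := .of_nonneg (Unitization.inr_nonneg_iff.mpr hs)
  have key : ∀ n : ℕ, ∃ v : A, ‖star v * y * v - x‖ ≤ ((n : ℝ) + 1)⁻¹ := by
    intro n
    set c : ℝ := ((n : ℝ) + 1)⁻¹ with hc_def
    have hc : 0 < c := by positivity
    set f : ℝ → ℝ := fun t => (Real.sqrt (max t 0 + c))⁻¹ with hf_def
    have hfc : Continuous f := by
      apply Continuous.inv₀ (by fun_prop)
      intro t; exact (Real.sqrt_pos.mpr (by positivity)).ne'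
    set q : ℝ → ℝ := fun t => Real.sqrt (c / (max t 0 + c)) with hq_def
    have hqc : Continuous q := by
      apply Real.continuous_sqrt.comp
      exact Continuous.div continuous_const (by fun_prop) fun t => by positivity
    set r : A⁺¹ := cfc f (y : A⁺¹) with hr_def
    set p : A⁺¹ := cfc q (y : A⁺¹) with hp_def
    have hrsa : IsSelfAdjoint r := cfc_predicate f _
    have hpsa : IsSelfAdjoint p := cfc_predicate q _
    have hspec : ∀ t ∈ spectrum ℝ (y : A⁺¹), 0 ≤ t := fun t ht =>
      spectrum_nonneg_of_nonneg hY ht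
    have hqq : ∀ t : ℝ, q t * q t = c / (max t 0 + c) := fun t =>
      Real.mul_self_sqrt (by positivity)
    have hrYr : r * (y : A⁺¹) * r = cfc (fun t => f t * t * f t) (y : A⁺¹) := by
      rw [cfc_mul (fun t => f t * t) f _ (by fun_prop) hfc.continuousOn,
        cfc_mul f (fun t : ℝ => t) _ hfc.continuousOn (by fun_prop), cfc_id' ℝ ((y : A⁺¹))]
    have hpYp : p * (y : A⁺¹) * p = cfc (fun t => q t * t * q t) (y : A⁺¹) := by
      rw [cfc_mul (fun t => q t * t) q _ (by fun_prop) hqc.continuousOn,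
        cfc_mul q (fun t : ℝ => t) _ hqc.continuousOn (by fun_prop), cfc_id' ℝ ((y : A⁺¹))]
    have hpp : p * p = cfc (fun t => q t * q t) (y : A⁺¹) :=
      (cfc_mul q q _ hqc.continuousOn hqc.continuousOn).symm
    have hfid : ∀ t : ℝ, 0 ≤ t → f t * t * f t = t / (t + c) := by
      intro t ht
      have h1 : max t 0 = t := max_eq_left ht
      have h2 : (0:ℝ) < t + c := by positivity
      rw [hf_def]
      simp only [h1]
      rw [show (Real.sqrt (t + c))⁻¹ * t * (Real.sqrt (t + c))⁻¹
          = t / (Real.sqrt (t + c) * Real.sqrt (t + c)) by field_simp,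
        Real.mul_self_sqrt h2.le]
    have hE2 : 1 - r * (y : A⁺¹) * r = p * p := by
      rw [hrYr, hpp, ← cfc_one ℝ ((y : A⁺¹)),
        ← cfc_sub _ _ _ (by fun_prop) (by fun_prop)]
      apply cfc_congr
      intro t ht
      have ht0 := hspec t ht
      have h2 : (0:ℝ) < t + c := by positivity
      simp only [Pi.one_apply]
      rw [hfid t ht0, hqq t, max_eq_left ht0]
      field_simp; ring
    set V : A⁺¹ := r * (s : A⁺¹) with hV_def
    have hfst : V.fst = 0 := by rw [hV_def, Unitization.fst_mul, Unitization.fst_inr, mul_zero]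
    have hv : ((V.snd : A) : A⁺¹) = V := by
      conv_rhs => rw [← Unitization.inl_fst_add_inr_snd_eq V]
      rw [hfst, Unitization.inl_zero, zero_add]
    have hstarV : star V = (s : A⁺¹) * r := by
      rw [hV_def, star_mul, hrsa.star_eq, hSsa.star_eq]
    set T : A⁺¹ := p * (s : A⁺¹) with hT_def
    have hstarT : star T = (s : A⁺¹) * p := by
      rw [hT_def, star_mul, hpsa.star_eq, hSsa.star_eq]
    have hTT : star T * T = (s : A⁺¹) * (p * p) * (s : A⁺¹) := by
      rw [hstarT, hT_def]; simp only [mul_assoc]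
    have hTT2 : T * star T = p * (x : A⁺¹) * p := by
      rw [hstarT, hT_def, show p * (s : A⁺¹) * ((s : A⁺¹) * p)
        = p * ((s : A⁺¹) * (s : A⁺¹)) * p by simp only [mul_assoc], hS]
    have hdiff : (x : A⁺¹) - star V * (y : A⁺¹) * V = star T * T := by
      rw [hstarV, hV_def, hTT, ← hE2, ← hS]
      noncomm_ring
    have hconj : p * (x : A⁺¹) * p ≤ p * (y : A⁺¹) * p := by
      have := star_left_conjugate_le_conjugate hXY p
      rwa [hpsa.star_eq] at this
    have hposX : (0 : A⁺¹) ≤ p * (x : A⁺¹) * p := by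
      have := star_left_conjugate_nonneg hX p
      rwa [hpsa.star_eq] at this
    have hn1 : ‖p * (x : A⁺¹) * p‖ ≤ ‖p * (y : A⁺¹) * p‖ :=
      CStarAlgebra.norm_le_norm_of_nonneg_of_le hposX hconj
    have hn2 : ‖p * (y : A⁺¹) * p‖ ≤ c := by
      rw [hpYp]
      refine norm_cfc_le hc.le fun t ht => ?_
      have ht0 := hspec t ht
      have h2 : (0:ℝ) < t + c := by positivity
      have : q t * t * q t = c * t / (t + c) := by
        rw [show q t * t * q t = (q t * q t) * t by ring, hqq t, max_eq_left ht0]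
        field_simp
      rw [this, Real.norm_eq_abs, abs_of_nonneg (by positivity), div_le_iff₀ h2]
      nlinarith
    refine ⟨V.snd, ?_⟩
    rw [← Unitization.norm_inr (𝕜 := ℂ), Unitization.inr_sub, Unitization.inr_mul,
      Unitization.inr_mul, Unitization.inr_star, hv, norm_sub_rev, hdiff]
    calc ‖star T * T‖ = ‖T‖ * ‖T‖ := CStarRing.norm_star_mul_self
      _ = ‖T * star T‖ := CStarRing.norm_self_mul_star.symm
      _ = ‖p * (x : A⁺¹) * p‖ := by rw [hTT2]
      _ ≤ c := hn1.trans hn2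
  choose v hv using key
  exact ⟨v, squeeze_zero (fun n => norm_nonneg _) hv my_tendsto_inv_nat⟩

open scoped CStarAlgebra in
lemma rordam (c w : A) (hc : 0 ≤ c) (hw : 0 ≤ w) {ε : ℝ} (hε : 0 < ε)
    (hcw : ‖c - w‖ < ε) : CuntzLE (cut c ε) w := by
  have hcsa : IsSelfAdjoint c := .of_nonneg hc
  set η : ℝ := ‖c - w‖ with hη_def
  have hη : 0 ≤ η := norm_nonneg _
  have hεη : 0 < ε - η := by simp only [hη_def]; linarith
  set h : ℝ → ℝ := fun t => Real.sqrt (max (t - ε) 0 / max (t - η) (ε - η)) with hh_def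
  have hden : ∀ t, 0 < max (t - η) (ε - η) := fun t => lt_max_of_lt_right hεη
  have hquot : ∀ t, 0 ≤ max (t - ε) 0 / max (t - η) (ε - η) := fun t =>
    div_nonneg (le_max_right _ _) (hden t).le
  have hhc : Continuous h := by
    apply Real.continuous_sqrt.comp
    exact (by fun_prop : Continuous fun t : ℝ => max (t - ε) 0).div (by fun_prop)
      fun t => (hden t).ne'
  have hh0 : h 0 = 0 := by
    have h1 : max ((0:ℝ) - ε) 0 = 0 := max_eq_right (by linarith)
    rw [hh_def]
    simp only [h1, zero_div, Real.sqrt_zero]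
  have hhsq : ∀ t, h t * h t = max (t - ε) 0 / max (t - η) (ε - η) := fun t =>
    Real.mul_self_sqrt (hquot t)
  set r : A := cfcₙ h c with hr_def
  have hrsa : IsSelfAdjoint r := cfcₙ_predicate h c
  have key : ∀ t : ℝ, h t * (t * h t) - η * (h t * h t) = max (t - ε) 0 := by
    intro t
    rw [show h t * (t * h t) - η * (h t * h t) = (h t * h t) * (t - η) by ring, hhsq]
    rcases le_total t ε with h1 | h1
    · rw [max_eq_right (by linarith : t - ε ≤ 0)]; simp
    · rw [max_eq_left (by linarith : ε - η ≤ t - η), div_mul_cancel₀]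
      exact (by linarith : (0:ℝ) < t - η).ne'
  have hrcr : cfcₙ (fun t => h t * (t * h t)) c = r * (c * r) := by
    rw [cfcₙ_mul h _ c hhc.continuousOn hh0
      (by exact (continuous_id.mul hhc).continuousOn) (by simp [hh0]),
      cfcₙ_mul (fun t : ℝ => t) h c (by fun_prop) rfl hhc.continuousOn hh0, cfcₙ_id' ℝ c]
  have hrr : cfcₙ (fun t => η * (h t * h t)) c = η • (r * r) := by
    rw [cfcₙ_const_mul η _ c (by exact (hhc.mul hhc).continuousOn) (by simp [hh0]),
      cfcₙ_mul h h c hhc.continuousOn hh0 hhc.continuousOn hh0]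
  have hcut : cut c ε = r * (c * r) - η • (r * r) := by
    rw [← hrcr, ← hrr, ← cfcₙ_sub _ _ c
      (by exact (hhc.mul (continuous_id.mul hhc)).continuousOn) (by simp [hh0])
      (by exact (continuous_const.mul (hhc.mul hhc)).continuousOn) (by simp [hh0]), cut]
    exact congrArg (fun g => cfcₙ g c) (funext key).symm
  set z : A := η • (r * r) - r * (c - w) * r with hz_def
  have hz : 0 ≤ z := by
    rw [← Unitization.inr_nonneg_iff]
    have hrB : IsSelfAdjoint ((r : A) : A⁺¹) := (Unitization.isSelfAdjoint_inr (R := ℂ)).mpr hrsa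
    have hid : ((z : A) : A⁺¹)
        = star ((r : A) : A⁺¹) * (algebraMap ℝ A⁺¹ η - ((c - w : A) : A⁺¹)) * ((r : A) : A⁺¹) := by
      rw [hrB.star_eq, hz_def, Unitization.inr_sub ℂ, Unitization.inr_smul, Unitization.inr_mul,
        Unitization.inr_mul, Unitization.inr_mul, Algebra.algebraMap_eq_smul_one]
      rw [mul_sub, sub_mul, mul_smul_comm, smul_mul_assoc, mul_one]
    rw [hid]
    refine star_left_conjugate_nonneg ?_ _
    rw [sub_nonneg]
    have hdsa : IsSelfAdjoint ((c - w : A) : A⁺¹) :=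
      (Unitization.isSelfAdjoint_inr (R := ℂ)).mpr (hcsa.sub (.of_nonneg hw))
    have := hdsa.le_algebraMap_norm_self
    rwa [Unitization.norm_inr, ← hη_def] at this
  have hle : cut c ε ≤ star r * w * r := by
    rw [hrsa.star_eq, ← sub_nonneg, hcut]
    have : r * w * r - (r * (c * r) - η • (r * r)) = z := by
      rw [hz_def]
      noncomm_ring
    rw [this]
    exact hz
  exact (cuntzLE_of_le (cut_nonneg c ε) hle).trans' (cuntzLE_conj w r)

lemma cuntzLE_cut_of_cuntzLE {a b : A} (ha : 0 ≤ a) {ε : ℝ} (hε : 0 < ε)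
    (h : CuntzLE a b) : CuntzLE (cut a ε) b := by
  obtain ⟨u, hu_sa, hu_norm, hu_eq⟩ := exists_conj_cut a ha hε
  obtain ⟨v, hv⟩ := h
  refine ⟨fun n => v n * u, ?_⟩
  refine squeeze_zero (g := fun n => ‖star (v n) * b * v n - a‖) (fun n => norm_nonneg _) ?_ hv
  intro n
  have hid : star (v n * u) * b * (v n * u) - cut a ε
      = u * (star (v n) * b * v n - a) * u := by
    rw [← hu_eq, star_mul, hu_sa.star_eq]
    noncomm_ring
  rw [hid]
  calc ‖u * (star (v n) * b * v n - a) * u‖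
      ≤ ‖u * (star (v n) * b * v n - a)‖ * ‖u‖ := norm_mul_le _ _
    _ ≤ ‖u‖ * ‖star (v n) * b * v n - a‖ * ‖u‖ := by gcongr; exact norm_mul_le _ _
    _ ≤ 1 * ‖star (v n) * b * v n - a‖ * 1 := by gcongr
    _ = ‖star (v n) * b * v n - a‖ := by ring

theorem stmt_9 (a b : A) (ha : 0 ≤ a) (hb : 0 ≤ b) :
    List.TFAE
      [CuntzLE a b,
       ∀ ε : ℝ, 0 < ε → CuntzLE (cut a ε) b,
       ∀ ε : ℝ, 0 < ε → ∃ δ : ℝ, 0 < δ ∧ CuntzLE (cut a ε) (cut b δ)] := by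
  tfae_have 1 → 2 := fun h ε hε => cuntzLE_cut_of_cuntzLE ha hε h
  tfae_have 2 → 3 := by
    intro h ε hε
    obtain ⟨v, hv⟩ := h (ε / 2) (by positivity)
    obtain ⟨N, hN⟩ := (hv.eventually (gt_mem_nhds (by positivity : (0:ℝ) < ε / 8))).exists
    set v0 := v N with hv0_def
    set δ : ℝ := ε / (8 * (‖v0‖ ^ 2 + 1)) with hδ_def
    have hδ : 0 < δ := by positivity
    refine ⟨δ, hδ, ?_⟩
    set w : A := star v0 * cut b δ * v0 with hw_def
    have hw0 : 0 ≤ w := star_left_conjugate_nonneg (cut_nonneg b δ) v0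
    have hwc : ‖cut a (ε / 2) - w‖ < ε / 2 := by
      have hid : cut a (ε / 2) - w
          = (cut a (ε / 2) - star v0 * b * v0) + star v0 * (b - cut b δ) * v0 := by
        rw [hw_def]; noncomm_ring
      have h1 : ‖star v0 * (b - cut b δ) * v0‖ ≤ ‖v0‖ ^ 2 * δ := by
        refine (norm_conj_le _ _).trans ?_
        gcongr
        rw [norm_sub_rev]
        exact norm_cut_sub_le b hb hδ
      have h2 : ‖v0‖ ^ 2 * δ ≤ ε / 8 := by
        rw [hδ_def, mul_comm, div_mul_eq_mul_div,
          div_le_div_iff₀ (by positivity) (by positivity)]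
        nlinarith [sq_nonneg ‖v0‖, hε.le]
      have h3 : ‖cut a (ε / 2) - star v0 * b * v0‖ < ε / 8 := by
        rw [norm_sub_rev]; exact hN
      calc ‖cut a (ε / 2) - w‖
          ≤ ‖cut a (ε / 2) - star v0 * b * v0‖ + ‖star v0 * (b - cut b δ) * v0‖ := by
            rw [hid]; exact norm_add_le _ _
        _ < ε / 8 + ε / 8 := by
            have := h1.trans h2
            linarith
        _ ≤ ε / 2 := by linarith
    have hror := rordam (cut a (ε / 2)) w (cut_nonneg a (ε / 2)) hw0
      (by positivity : (0:ℝ) < ε / 2) hwc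
    rw [cut_cut a ha (by positivity) (by positivity), add_halves] at hror
    refine hror.trans' ?_
    have := cuntzLE_conj (cut b δ) v0
    rwa [← hw_def] at this
  tfae_have 3 → 1 := by
    intro h
    have h2 : ∀ ε : ℝ, 0 < ε → CuntzLE (cut a ε) b := by
      intro ε hε
      obtain ⟨δ, hδ, hle⟩ := h ε hε
      obtain ⟨u, hu_sa, -, hu_eq⟩ := exists_conj_cut b hb hδ
      have hcb : CuntzLE (cut b δ) b := by
        have := cuntzLE_conj b u
        rwa [hu_sa.star_eq, hu_eq] at this
      exact hle.trans' hcb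
    have key : ∀ n : ℕ, ∃ u : A, ‖star u * b * u - a‖ ≤ 2 * ((n : ℝ) + 1)⁻¹ := by
      intro n
      have hpos : (0:ℝ) < ((n : ℝ) + 1)⁻¹ := by positivity
      obtain ⟨v, hv⟩ := h2 _ hpos
      obtain ⟨m, hm⟩ := (hv.eventually (gt_mem_nhds hpos)).exists
      refine ⟨v m, ?_⟩
      have htri := dist_triangle (star (v m) * b * v m) (cut a ((n : ℝ) + 1)⁻¹) a
      simp only [dist_eq_norm] at htri
      have := norm_cut_sub_le a ha hpos
      calc ‖star (v m) * b * v m - a‖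
          ≤ ‖star (v m) * b * v m - cut a ((n : ℝ) + 1)⁻¹‖ + ‖cut a ((n : ℝ) + 1)⁻¹ - a‖ := htri
        _ ≤ ((n : ℝ) + 1)⁻¹ + ((n : ℝ) + 1)⁻¹ := add_le_add hm.le this
        _ = 2 * ((n : ℝ) + 1)⁻¹ := by ring
    choose u hu using key
    refine ⟨u, squeeze_zero (fun n => norm_nonneg _) hu ?_⟩
    simpa using my_tendsto_inv_nat.const_mul (2:ℝ)
  tfae_finish
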